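/- arXiv:2511.10811 — 4 statements merged into one kernel-verified Lean document; each statement's English description precedes it below -/
import Mathlib

section
/- Let n ≡ 1 (mod 4) be a positive integer, and let k' = v_2((3n+1)/2). Then for every p ≥ 0: k' = 2p+1 if and only if n ≡ r_p (mod 2^{2p+3}), where r_p is the integer whose binary representation is 0 followed by p+1 copies of 01, i.e. the binary representation of n ends in 0(01)^p01; and k' = 2p+2 if and only if the binary representation of n ends in 11(01)^p01. -/
lemma val2_eq_iff {N t : ℕ} (hN : N ≠ 0) :
    padicValNat 2 N = t ↔ N % 2 ^ (t + 1) = 2 ^ t := by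
  haveI : Fact (Nat.Prime 2) := ⟨Nat.prime_two⟩
  constructor
  · intro h
    have hd : 2 ^ t ∣ N := h ▸ pow_padicValNat_dvd
    have hnd : ¬ 2 ^ (t + 1) ∣ N := h ▸ pow_succ_padicValNat_not_dvd hN
    obtain ⟨m, hm⟩ := hd
    have hm2 : m % 2 = 1 := by
      rcases Nat.mod_two_eq_zero_or_one m with h0 | h1
      · obtain ⟨m', hm'⟩ : 2 ∣ m := Nat.dvd_of_mod_eq_zero h0
        exact absurd ⟨m', by rw [hm, hm', pow_succ]; ring⟩ hnd
      · exact h1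
    rw [hm, pow_succ, Nat.mul_mod_mul_left, hm2, mul_one]
  · intro h
    have hNdec : 2 ^ (t + 1) * (N / 2 ^ (t + 1)) + 2 ^ t = N := by
      rw [← h]; exact Nat.div_add_mod _ _
    have hd : 2 ^ t ∣ N := by
      refine ⟨2 * (N / 2 ^ (t + 1)) + 1, ?_⟩
      nth_rewrite 1 [← hNdec]
      rw [pow_succ]; ring
    have hnd : ¬ 2 ^ (t + 1) ∣ N := by
      intro hdvd
      have h0 : N % 2 ^ (t + 1) = 0 := Nat.mod_eq_zero_of_dvd hdvd
      have : (2:ℕ) ^ t ≠ 0 := by positivity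
      omega
    have h1 : t ≤ padicValNat 2 N := (padicValNat_dvd_iff_le hN).mp hd
    have h2 : ¬ (t + 1 ≤ padicValNat 2 N) := fun hle =>
      hnd ((padicValNat_dvd_iff_le hN).mpr hle)
    omega

lemma cong_iff (n m r : ℕ) (hr : r < 2 ^ m) :
    (3 * n + 1) % 2 ^ m = (3 * r + 1) % 2 ^ m ↔ n % 2 ^ m = r := by
  constructor
  · intro h
    have h1 : (3 * n + 1) ≡ (3 * r + 1) [MOD 2 ^ m] := h
    have h2 : 3 * n ≡ 3 * r [MOD 2 ^ m] := by
      have := Nat.ModEq.add_right_cancel' 1 h1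
      simpa using this
    have h3 : n ≡ r [MOD 2 ^ m] := by
      refine Nat.ModEq.cancel_left_of_coprime ?_ h2
      exact Nat.Coprime.pow_left m (by decide : Nat.Coprime 2 3)
    have := h3.symm
    unfold Nat.ModEq at this
    rw [Nat.mod_eq_of_lt hr] at this
    omega
  · intro h
    have h3 : n ≡ r [MOD 2 ^ m] := by
      unfold Nat.ModEq; rw [h, Nat.mod_eq_of_lt hr]
    exact ((h3.mul_left 3).add_right 1)

/-- For positive `n ≡ 1 (mod 4)` and `k' = v₂((3n+1)/2)`:
`k' = 2p+1` iff the binary representation of `n` ends in `0(01)^p 01`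
(i.e. `n ≡ (4^(p+1)-1)/3 (mod 2^(2p+3))`), and `k' = 2p+2` iff it ends in
`11(01)^p 01` (i.e. `n ≡ (4^(p+1)-1)/3 + 3·4^(p+1) (mod 2^(2p+4))`). -/
theorem kprime_binary_suffix (n : ℕ) (hpos : 0 < n) (h4 : n % 4 = 1) (k' : ℕ)
    (hk' : k' = padicValNat 2 ((3 * n + 1) / 2)) :
    (∀ p : ℕ, k' = 2 * p + 1 ↔ n % 2 ^ (2 * p + 3) = (4 ^ (p + 1) - 1) / 3) ∧
    (∀ p : ℕ, k' = 2 * p + 2 ↔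
      n % 2 ^ (2 * p + 4) = (4 ^ (p + 1) - 1) / 3 + 3 * 4 ^ (p + 1)) := by
  haveI : Fact (Nat.Prime 2) := ⟨Nat.prime_two⟩
  set N := 3 * n + 1 with hN
  have hNne : N ≠ 0 := by omega
  have hN4 : 4 ∣ N := by omega
  have hN2 : (2:ℕ) ∣ N := by omega
  have hdiv : padicValNat 2 (N / 2) = padicValNat 2 N - 1 := padicValNat.div hN2
  have hv1 : 1 ≤ padicValNat 2 N := (padicValNat_dvd_iff_le hNne).mp (by simpa using hN2)
  have key : ∀ j : ℕ, k' = j + 1 ↔ N % 2 ^ (j + 3) = 2 ^ (j + 2) := by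
    intro j
    have h1 : k' = j + 1 ↔ padicValNat 2 N = j + 2 := by
      rw [hk', hdiv]; omega
    rw [h1, val2_eq_iff hNne]
  -- facts about r
  have hdvd3 : ∀ p : ℕ, (3:ℕ) ∣ 4 ^ (p + 1) - 1 := by
    intro p
    have : (4:ℕ) ^ (p+1) % 3 = 1 := by
      have : (4:ℕ) ≡ 1 [MOD 3] := by decide
      simpa [Nat.ModEq] using (this.pow (p+1))
    have h4p : 1 ≤ (4:ℕ) ^ (p+1) := Nat.one_le_pow _ _ (by norm_num)
    omega
  have hr_eq : ∀ p : ℕ, 3 * ((4 ^ (p + 1) - 1) / 3) + 1 = 4 ^ (p + 1) := by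
    intro p
    have h4p : 1 ≤ (4:ℕ) ^ (p+1) := Nat.one_le_pow _ _ (by norm_num)
    have := Nat.div_mul_cancel (hdvd3 p)
    omega
  have hpow : ∀ p : ℕ, (4:ℕ) ^ (p + 1) = 2 ^ (2 * p + 2) := by
    intro p
    rw [show (4:ℕ) = 2 ^ 2 by norm_num, ← pow_mul]
    ring_nf
  constructor
  · intro p
    rw [show 2 * p + 1 = (2 * p) + 1 from rfl, key (2 * p)]
    have hrlt : (4 ^ (p + 1) - 1) / 3 < 2 ^ (2 * p + 3) := by
      have h1 : (4 ^ (p + 1) - 1) / 3 < 4 ^ (p + 1) := by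
        have h4p : 1 ≤ (4:ℕ) ^ (p+1) := Nat.one_le_pow _ _ (by norm_num)
        have := hr_eq p
        omega
      calc (4 ^ (p + 1) - 1) / 3 < 4 ^ (p+1) := h1
        _ = 2 ^ (2*p+2) := hpow p
        _ < 2 ^ (2*p+3) := by
            exact Nat.pow_lt_pow_right (by norm_num) (by omega)
    rw [← cong_iff n (2*p+3) _ hrlt, hr_eq p, hpow p]
    have : (2:ℕ) ^ (2*p+2) % 2 ^ (2*p+3) = 2 ^ (2*p+2) := by
      apply Nat.mod_eq_of_lt
      exact Nat.pow_lt_pow_right (by norm_num) (by omega)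
    rw [this]
  · intro p
    rw [show 2 * p + 2 = (2 * p + 1) + 1 from rfl, key (2 * p + 1)]
    have h4p : 1 ≤ (4:ℕ) ^ (p+1) := Nat.one_le_pow _ _ (by norm_num)
    have hr1 : (4 ^ (p + 1) - 1) / 3 < 4 ^ (p + 1) := by
      have := hr_eq p; omega
    have hp24 : (2:ℕ) ^ (2*p+1+3) = 4 * 4 ^ (p+1) := by
      rw [hpow p]; ring
    have hrlt : (4 ^ (p + 1) - 1) / 3 + 3 * 4 ^ (p + 1) < 2 ^ (2 * p + 1 + 3) := by
      omega
    rw [← cong_iff n (2*p+1+3) _ hrlt]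
    have hlhs : 3 * ((4 ^ (p + 1) - 1) / 3 + 3 * 4 ^ (p + 1)) + 1 = 10 * 4 ^ (p+1) := by
      have := hr_eq p; ring_nf; omega
    rw [hlhs]
    have hmod : 10 * 4 ^ (p+1) % 2 ^ (2*p+1+3) = 2 ^ (2*p+1+2) := by
      have h10 : 10 * 4 ^ (p+1) = (4 * 4 ^ (p+1)) * 2 + 2 * 4 ^ (p+1) := by ring
      have h2 : (2:ℕ) ^ (2*p+1+2) = 2 * 4 ^ (p+1) := by rw [hpow p]; ring
      rw [hp24, h10, h2, Nat.mul_add_mod]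
      apply Nat.mod_eq_of_lt; omega
    rw [hmod]
end

section
/- Let n > 1 be odd with l = v_2(n+1), so n = 2^{l+1}·m + 2^l − 1 for some m ≥ 0. Write the Collatz trajectory after l up-steps as c_l = 3^l·(2m) + (3^l − 1), and for 0 ≤ i ≤ k' (k' = v_2(c_l)) write c_{l+i} = c_l / 2^i = 3^l·p_i + q_i with 0 ≤ q_i < 3^l. Then q_i = a_{l,i} for all 0 ≤ i ≤ k', where a_{l,i} is defined by a_{l,0} = 3^l − 1 and a_{l,i+1} = a_{l,i}/2 if even, (a_{l,i} + 3^l)/2 if odd. -/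
/-- The halving-mod-`3^l` recurrence. -/
def aSeq (l : ℕ) : ℕ → ℕ
  | 0 => 3 ^ l - 1
  | i + 1 => if aSeq l i % 2 = 0 then aSeq l i / 2 else (aSeq l i + 3 ^ l) / 2

/-!
Since `3^l` is odd, one step of `aSeq` is division by `2` in `ℤ/3^lℤ`: `2 · a_{l,i+1} ≡ a_{l,i}`.
If `2^i ∣ c` then `c / 2^i = 2 · (c / 2^(i+1))` for the next halving, so by cancelling the unit
`2` the residues of `c, c/2, …, c/2^i` follow the same recurrence as `aSeq`, starting from
`c mod 3^l = 3^l - 1`; the dependence on `m` disappears because `3^l · 2m ≡ 0`.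
-/

namespace aSeq

theorem lt_three_pow (l i : ℕ) : aSeq l i < 3 ^ l := by
  have h3 : 1 ≤ 3 ^ l := Nat.one_le_pow l 3 (by norm_num)
  induction i with
  | zero => simp only [aSeq]; omega
  | succ i ih => simp only [aSeq]; split <;> omega

theorem two_mul_succ_modEq (l i : ℕ) : 2 * aSeq l (i + 1) ≡ aSeq l i [MOD 3 ^ l] := by
  have h3 : 3 ^ l % 2 = 1 := by simp [Nat.pow_mod]
  rw [aSeq]
  split
  · rw [Nat.mul_div_cancel' (Nat.dvd_of_mod_eq_zero ‹_›)]
  · rw [Nat.mul_div_cancel' (by omega)]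
    exact Nat.add_mod_right _ _

theorem mod_eq_succ_of_two_mul_modEq {l i x : ℕ} (h : 2 * x ≡ aSeq l i [MOD 3 ^ l]) :
    x % 3 ^ l = aSeq l (i + 1) := by
  have hcop : Nat.Coprime (3 ^ l) 2 := Nat.Coprime.pow_left l (by decide)
  have hx : x ≡ aSeq l (i + 1) [MOD 3 ^ l] :=
    Nat.ModEq.cancel_left_of_coprime hcop (h.trans (two_mul_succ_modEq l i).symm)
  rw [hx, Nat.mod_eq_of_lt (lt_three_pow l (i + 1))]

theorem div_two_pow_mod_eq {l c : ℕ} (hc : c % 3 ^ l = aSeq l 0) :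
    ∀ i, 2 ^ i ∣ c → c / 2 ^ i % 3 ^ l = aSeq l i
  | 0, _ => by simpa using hc
  | i + 1, hdvd => by
    have ih := div_two_pow_mod_eq hc i ((pow_dvd_pow 2 i.le_succ).trans hdvd)
    have hhalf : c / 2 ^ i = 2 * (c / 2 ^ (i + 1)) := by
      rw [pow_succ, ← Nat.div_div_eq_div_mul,
        Nat.mul_div_cancel' (Nat.dvd_div_of_mul_dvd (pow_succ 2 i ▸ hdvd))]
    rw [hhalf] at ih
    exact mod_eq_succ_of_two_mul_modEq (ih.trans (Nat.mod_eq_of_lt (lt_three_pow l i)).symm)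

end aSeq

theorem residues_along_down_steps_general (l m : ℕ) :
    ∀ i ≤ padicValNat 2 (3 ^ l * (2 * m) + (3 ^ l - 1)),
      ((3 ^ l * (2 * m) + (3 ^ l - 1)) / 2 ^ i) % 3 ^ l = aSeq l i := by
  have hapex : (3 ^ l * (2 * m) + (3 ^ l - 1)) % 3 ^ l = aSeq l 0 := by
    rw [Nat.mul_add_mod, aSeq, Nat.mod_eq_of_lt (Nat.sub_lt (by positivity) one_pos)]
  intro i hi
  exact aSeq.div_two_pow_mod_eq hapex i ((pow_dvd_pow 2 hi).trans pow_padicValNat_dvd)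

/-- For odd `n > 1` with `l = v₂(n+1)`, writing `n = 2^(l+1)·m + 2^l - 1`,
the apex is `c_l = 3^l·(2m) + (3^l - 1)`; for every `0 ≤ i ≤ k' = v₂(c_l)`, the residue
modulo `3^l` of `c_l / 2^i` equals `a_{l,i}`. -/
theorem residues_along_down_steps (n l m : ℕ) (hodd : Odd n) (hn : 1 < n)
    (hl : l = padicValNat 2 (n + 1)) (hm : n = 2 ^ (l + 1) * m + 2 ^ l - 1) :
    ∀ i ≤ padicValNat 2 (3 ^ l * (2 * m) + (3 ^ l - 1)),
      ((3 ^ l * (2 * m) + (3 ^ l - 1)) / 2 ^ i) % 3 ^ l = aSeq l i :=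
  residues_along_down_steps_general l m
end

section
/- Let n > 1 be odd, l = v_2(n+1), and define the binary sequence H_l of length φ(3^l) by H_{l,p} = a_{l, φ(3^l) − p − 1} mod 2 where a_{l,i} = 2^{−i}·(3^l − 1) mod 3^l. Let S_l be the right-infinite (periodic, with a suffix 1^l appended) binary string (H_l)^∞ followed by 1^l at the right end. If s is the length of the longest common suffix between the binary representation of n and S_l, then s ≥ l + 1, and the long Collatz step of n satisfies k = l and k' = s − l, where k' = v_2((3/2)^l·(n+1) − 1). -/
/-- `a_{l,i} = 2^{-i}·(3^l - 1) mod 3^l`, as a natural number in `[0, 3^l)`. -/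
def aVal (l i : ℕ) : ℕ :=
  (((3 ^ l - 1 : ℕ) : ZMod (3 ^ l)) * ((2 : ZMod (3 ^ l))⁻¹) ^ i).val

/-- The `j`-th bit (from the right, 0-indexed) of the right-infinite binary string
`S_l = (H_l)^∞ 1^l`, where `H_{l,p} = a_{l, φ(3^l) - p - 1} mod 2`: positions `0..l-1`
are `1`, and position `l + t` is `a_{l, t mod φ(3^l)} mod 2`. -/
def sBit (l j : ℕ) : ℕ :=
  if j < l then 1 else aVal l ((j - l) % Nat.totient (3 ^ l)) % 2

/-
Write `n + 1 = 2^l m` with `m` odd. Above position `l`, the string `S_l` carries the 2-adic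
digits of `3^{-l} - 1`: since `a_{l,t+1}` is `a_{l,t}` halved modulo `3^l`, the value `x_t` of
the `t` digits at positions `l, …, l + t - 1` satisfies `3^l (x_t + 1) = 2^t a_{l,t} + 1`. As
`3^l` is a unit modulo powers of `2`, the last `l + t` bits of `n` therefore agree with `S_l`
exactly when `2^t ∣ 3^l m - 1`, so the common suffix has length `s = l + v₂(3^l m - 1)`.
-/

open Finset

lemma Nat.mod_eq_sub_one_of_dvd_add_one {n k : ℕ} (h : k ∣ n + 1) : n % k = k - 1 := by
  obtain ⟨q, hq⟩ := h
  obtain ⟨q, rfl⟩ := Nat.exists_eq_add_one_of_ne_zero (by rintro rfl; simp at hq : q ≠ 0)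
  have hk : 0 < k := Nat.pos_of_ne_zero (by rintro rfl; simp at hq)
  rw [mul_add, mul_one] at hq
  rw [show n = k * q + (k - 1) by omega, Nat.mul_add_mod, Nat.mod_eq_of_lt (by omega)]

lemma exists_eq_two_pow_padicValNat_mul_odd {N : ℕ} (hN : N ≠ 0) :
    ∃ m, Odd m ∧ N = 2 ^ padicValNat 2 N * m := by
  obtain ⟨k, m, hm_odd, rfl⟩ := Nat.exists_eq_two_pow_mul_odd hN
  refine ⟨m, hm_odd, ?_⟩
  rw [padicValNat.mul (by positivity) hm_odd.pos.ne', padicValNat.prime_pow,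
    padicValNat.eq_zero_of_not_dvd hm_odd.not_two_dvd_nat, add_zero]

def bitsVal (d : ℕ → ℕ) (j : ℕ) : ℕ := ∑ i ∈ range j, d i * 2 ^ i

lemma bitsVal_succ (d : ℕ → ℕ) (j : ℕ) : bitsVal d (j + 1) = bitsVal d j + 2 ^ j * d j := by
  rw [bitsVal, bitsVal, sum_range_succ, mul_comm]

section Bits

variable {d : ℕ → ℕ}

lemma bitsVal_lt (hd : ∀ i, d i < 2) (j : ℕ) : bitsVal d j < 2 ^ j := by
  induction j with
  | zero => simp [bitsVal]
  | succ j ih =>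
    rw [bitsVal_succ, pow_succ]
    have := hd j
    nlinarith

lemma mod_two_pow_succ_eq_bitsVal_iff {n j : ℕ} (h : n % 2 ^ j = bitsVal d j) :
    n % 2 ^ (j + 1) = bitsVal d (j + 1) ↔ n / 2 ^ j % 2 = d j := by
  rw [Nat.mod_pow_succ, bitsVal_succ, h, add_right_inj, mul_right_inj' (by positivity)]

lemma testBit_iff_of_mod_two_pow_eq_bitsVal_iff (hd : ∀ i, d i < 2) {n s : ℕ}
    (h : ∀ j, n % 2 ^ j = bitsVal d j ↔ j ≤ s) :
    (∀ j < s, (n.testBit j = true ↔ d j = 1)) ∧ ¬(n.testBit s = true ↔ d s = 1) := by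
  have key : ∀ j ≤ s, ((n.testBit j = true ↔ d j = 1) ↔ j + 1 ≤ s) := by
    intro j hj
    rw [← h (j + 1), mod_two_pow_succ_eq_bitsVal_iff ((h j).2 hj),
      Nat.testBit_eq_decide_div_mod_eq, decide_eq_true_iff]
    have := hd j
    have := Nat.mod_lt (n / 2 ^ j) two_pos
    omega
  exact ⟨fun j hj => (key j hj.le).2 hj, fun hs => by simpa using (key s le_rfl).1 hs⟩

end Bits

section aVal

variable (l : ℕ)

lemma coprime_two_three_pow : Nat.Coprime 2 (3 ^ l) :=
  Nat.Coprime.pow_right l (by decide)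

lemma aVal_zero : aVal l 0 = 3 ^ l - 1 := by
  rw [aVal, pow_zero, mul_one, ZMod.val_natCast_of_lt (Nat.sub_lt (by positivity) one_pos)]

lemma aVal_lt (t : ℕ) : aVal l t < 3 ^ l := by
  have : NeZero (3 ^ l) := ⟨by positivity⟩
  exact ZMod.val_lt _

lemma two_mul_aVal_succ (t : ℕ) : 2 * aVal l (t + 1) = aVal l t + aVal l t % 2 * 3 ^ l := by
  have : NeZero (3 ^ l) := ⟨by positivity⟩
  set a := aVal l t
  have hodd : 3 ^ l % 2 = 1 := Nat.odd_iff.mp (Odd.pow (by decide))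
  obtain ⟨v, hv⟩ : 2 ∣ a + a % 2 * 3 ^ l := by
    rw [Nat.dvd_iff_mod_eq_zero, Nat.add_mod, Nat.mul_mod, hodd, Nat.mod_mod]
    omega
  have hv_lt : v < 3 ^ l := by
    have := aVal_lt l t
    have : a % 2 ≤ 1 := by omega
    nlinarith
  have hvz : (v : ZMod (3 ^ l)) = a * 2⁻¹ := by
    have h2 : (2 : ZMod (3 ^ l)) * 2⁻¹ = 1 := ZMod.mul_inv_of_unit _
      (by simpa using (ZMod.unitOfCoprime 2 (coprime_two_three_pow l)).isUnit)
    have : ((2 * v : ℕ) : ZMod (3 ^ l)) = a := by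
      rw [← hv, Nat.cast_add, Nat.cast_mul, ZMod.natCast_self, mul_zero, add_zero]
    rw [← this]
    push_cast
    linear_combination -(v : ZMod (3 ^ l)) * h2
  rw [hv, aVal, pow_succ, ← mul_assoc, ← ZMod.natCast_zmod_val (_ * _ ^ t), ← aVal, ← hvz,
    ZMod.val_natCast_of_lt hv_lt]

lemma aVal_mod_totient (t : ℕ) : aVal l (t % Nat.totient (3 ^ l)) = aVal l t := by
  have h : (2 : ZMod (3 ^ l))⁻¹ ^ Nat.totient (3 ^ l) = 1 := by
    have := congrArg Units.val
      (ZMod.pow_totient (ZMod.unitOfCoprime 2 (coprime_two_three_pow l))⁻¹)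
    rwa [Units.val_pow_eq_pow_val, ← ZMod.inv_coe_unit, ZMod.coe_unitOfCoprime,
      Nat.cast_ofNat, Units.val_one] at this
  rw [aVal, aVal]
  conv_rhs =>
    rw [← Nat.mod_add_div t (Nat.totient (3 ^ l)), pow_add, pow_mul, h, one_pow, mul_one]

end aVal

lemma sBit_lt_two (l j : ℕ) : sBit l j < 2 := by
  unfold sBit
  split_ifs <;> omega

lemma sBit_add (l t : ℕ) : sBit l (l + t) = aVal l t % 2 := by
  rw [sBit, if_neg (by omega), Nat.add_sub_cancel_left, aVal_mod_totient]

lemma bitsVal_sBit_of_le {l j : ℕ} (h : j ≤ l) : bitsVal (sBit l) j = 2 ^ j - 1 := by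
  induction j with
  | zero => rfl
  | succ j ih =>
    rw [bitsVal_succ, ih (by omega), sBit, if_pos (by omega), pow_succ]
    have := Nat.one_le_two_pow (n := j)
    omega

lemma three_pow_mul_bitsVal_sBit_add_one (l t : ℕ) :
    3 ^ l * (bitsVal (sBit l) (l + t) + 1) = 2 ^ l * (2 ^ t * aVal l t + 1) := by
  induction t with
  | zero =>
    rw [add_zero, bitsVal_sBit_of_le le_rfl, Nat.sub_add_cancel Nat.one_le_two_pow, aVal_zero,
      pow_zero, one_mul, Nat.sub_add_cancel (Nat.one_le_pow _ _ three_pos), mul_comm]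
  | succ t ih =>
    rw [← add_assoc, bitsVal_succ, sBit_add, pow_succ 2 t, mul_assoc, two_mul_aVal_succ, pow_add]
    linear_combination ih

lemma mod_two_pow_eq_bitsVal_sBit_iff {n l m : ℕ} (hm : n + 1 = 2 ^ l * m) (t : ℕ) :
    n % 2 ^ (l + t) = bitsVal (sBit l) (l + t) ↔ 2 ^ t ∣ 3 ^ l * m - 1 := by
  have hM : 1 ≤ 3 ^ l * m := by
    have : m ≠ 0 := by rintro rfl; simp at hm
    exact Nat.one_le_iff_ne_zero.2 (mul_ne_zero (by positivity) this)
  have key : 3 ^ l * ((bitsVal (sBit l) (l + t) : ℤ) - n) =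
      2 ^ l * (2 ^ t * aVal l t - ((3 ^ l * m - 1 : ℕ) : ℤ)) := by
    have h1 := congrArg (Nat.cast : ℕ → ℤ) (three_pow_mul_bitsVal_sBit_add_one l t)
    have h2 := congrArg (Nat.cast : ℕ → ℤ) hm
    push_cast [Nat.cast_sub hM] at h1 h2 ⊢
    linear_combination h1 - 3 ^ l * h2
  have hcop : IsCoprime ((2 : ℤ) ^ (l + t)) (3 ^ l) :=
    IsCoprime.pow (by norm_num [Int.isCoprime_iff_gcd_eq_one])
  have hcancel : ∀ x : ℤ, 2 ^ (l + t) ∣ 3 ^ l * x ↔ 2 ^ (l + t) ∣ x :=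
    fun x => ⟨hcop.dvd_of_dvd_mul_left, (Dvd.dvd.mul_left · _)⟩
  rw [← Nat.mod_eq_of_lt (bitsVal_lt (sBit_lt_two l) (l + t)), ← Nat.ModEq, Nat.modEq_iff_dvd,
    Nat.cast_pow, Nat.cast_ofNat, ← hcancel, key, pow_add,
    mul_dvd_mul_iff_left (by positivity), dvd_sub_right (dvd_mul_right _ _)]
  exact_mod_cast Iff.rfl

theorem loop_lengths_from_binary_suffix_general (n l : ℕ) (hodd : Odd n)
    (hl : l = padicValNat 2 (n + 1)) :
    ∃ s : ℕ,
      (∀ j < s, (n.testBit j = true ↔ sBit l j = 1)) ∧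
      ¬(n.testBit s = true ↔ sBit l s = 1) ∧
      l + 1 ≤ s ∧
      padicValNat 2 (3 ^ l * ((n + 1) / 2 ^ l) - 1) = s - l := by
  obtain ⟨m, hm_odd, hm⟩ := exists_eq_two_pow_padicValNat_mul_odd (Nat.add_one_ne_zero n)
  rw [← hl] at hm
  have hl_pos : 1 ≤ l := hl ▸ one_le_padicValNat_of_dvd (by omega) hodd.add_one.two_dvd
  have hM_odd : Odd (3 ^ l * m) := (Odd.pow (by decide)).mul hm_odd
  have hM : 3 ^ l * m - 1 ≠ 0 := by
    have : 3 ≤ 3 ^ l * m :=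
      (le_self_pow (by norm_num) (by omega)).trans (Nat.le_mul_of_pos_right _ hm_odd.pos)
    omega
  set K := padicValNat 2 (3 ^ l * m - 1)
  have hK : 1 ≤ K := one_le_padicValNat_of_dvd hM (Nat.Odd.sub_odd hM_odd odd_one).two_dvd
  have hsuffix : ∀ j, n % 2 ^ j = bitsVal (sBit l) j ↔ j ≤ l + K := by
    intro j
    rcases le_or_gt j l with hj | hj
    · rw [bitsVal_sBit_of_le hj,
        Nat.mod_eq_sub_one_of_dvd_add_one (hm ▸ (pow_dvd_pow 2 hj).mul_right m)]
      omega
    · obtain ⟨t, rfl⟩ := Nat.exists_eq_add_of_le hj.le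
      rw [mod_two_pow_eq_bitsVal_sBit_iff hm, padicValNat_dvd_iff_le hM]
      omega
  obtain ⟨hagree, hdiffer⟩ := testBit_iff_of_mod_two_pow_eq_bitsVal_iff (sBit_lt_two l) hsuffix
  refine ⟨l + K, hagree, hdiffer, by omega, ?_⟩
  rw [hm, Nat.mul_div_cancel_left m (by positivity), Nat.add_sub_cancel_left]

/-- Theorem 1: For odd `n > 1` with `l = v₂(n+1)`, the binary representation
of `n` shares with `S_l` a longest common suffix of some length `s ≥ l + 1` (agreement on
bits `0..s-1`, disagreement at bit `s`), and the long Collatz step of `n` has loop lengths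
`k = l` and `k' = v₂((3/2)^l·(n+1) - 1) = s - l`. -/
theorem loop_lengths_from_binary_suffix (n l : ℕ) (hodd : Odd n) (hn : 1 < n)
    (hl : l = padicValNat 2 (n + 1)) :
    ∃ s : ℕ,
      (∀ j < s, (n.testBit j = true ↔ sBit l j = 1)) ∧
      ¬(n.testBit s = true ↔ sBit l s = 1) ∧
      l + 1 ≤ s ∧
      padicValNat 2 (3 ^ l * ((n + 1) / 2 ^ l) - 1) = s - l :=
  loop_lengths_from_binary_suffix_general n l hodd hl
end

section
/- Consider odd positive integers n chosen uniformly at random from {1, 3, 5, ..., 2N−1} and let k(n) = v_2(n+1) and k'(n) = v_2((3/2)^{k(n)}·(n+1) − 1). Then asymptotically as N → ∞, the natural density (among odd integers) of {n : k(n) = a} is 2^{−a}, the density of {n : k'(n) = b} conditional on k(n) = a is 2^{−b}, and the density of {n : k(n) = a and k'(n) = b} is 2^{−(a+b)}; in particular k and k' are asymptotically independent. -/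
def collatzK (n : Nat) : Nat := padicValNat 2 (n + 1)

def collatzApex (n : Nat) : Nat := 3 ^ collatzK n * ((n + 1) / 2 ^ collatzK n) - 1

def collatzKp (n : Nat) : Nat := padicValNat 2 (collatzApex n)

def collatzKappa (n : Nat) : Nat := collatzApex n / 2 ^ collatzKp n

open Filter

/-!
Write `n + 1 = 2 ^ a * m` with `m` odd. Then `k(n) = a` and the apex is `3 ^ a * m - 1`, so
`k'(n) = b` exactly when `3 ^ a * m ≡ 2 ^ b + 1 [MOD 2 ^ (b + 1)]`. As `3` is a unit modulo
powers of `2`, this pins `m` to a single odd residue `s` modulo `2 ^ (b + 1)`: the event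
`{k = a, k' = b}` is the residue class `n + 1 ≡ 2 ^ a * s [MOD 2 ^ (a + b + 1)]`, just as `{k = a}`
is the class `n + 1 ≡ 2 ^ a [MOD 2 ^ (a + 1)]`. A residue class modulo `M` has natural density
`1 / M`, and the conditional density is the quotient of the two joint densities.
-/

open Finset Topology

lemma padicValNat_eq_iff_dvd_not_dvd {p x e : ℕ} [Fact p.Prime] (hx : x ≠ 0) :
    padicValNat p x = e ↔ p ^ e ∣ x ∧ ¬p ^ (e + 1) ∣ x := by
  rw [padicValNat_dvd_iff_le hx, padicValNat_dvd_iff_le hx]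
  omega

lemma padicValNat_two_eq_iff_modEq {x e : ℕ} (hx : x ≠ 0) :
    padicValNat 2 x = e ↔ x ≡ 2 ^ e [MOD 2 ^ (e + 1)] := by
  rw [padicValNat_eq_iff_dvd_not_dvd hx]
  constructor
  · rintro ⟨⟨q, rfl⟩, hq⟩
    have hq_odd : q ≡ 1 [MOD 2] := by
      rw [pow_succ] at hq
      rw [Nat.ModEq, Nat.one_mod]
      exact Nat.two_dvd_ne_zero.mp fun h => hq (Nat.mul_dvd_mul_left _ h)
    simpa [pow_succ] using hq_odd.mul_left' (2 ^ e)
  · intro h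
    refine ⟨(h.dvd_iff (pow_dvd_pow 2 e.le_succ)).mpr dvd_rfl, fun hdvd => ?_⟩
    have hle := Nat.le_of_dvd (by positivity) ((h.dvd_iff dvd_rfl).mp hdvd)
    rw [pow_succ] at hle
    have hpos : 0 < 2 ^ e := by positivity
    omega

lemma exists_eq_mul_modEq_iff {x c s M : ℕ} (hc : c ≠ 0) :
    (∃ m, x = c * m ∧ m ≡ s [MOD M]) ↔ x ≡ c * s [MOD c * M] := by
  constructor
  · rintro ⟨m, rfl, hm⟩
    exact hm.mul_left' c
  · intro h
    obtain ⟨m, rfl⟩ := (h.dvd_iff (dvd_mul_right c M)).mpr (dvd_mul_right c s)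
    exact ⟨m, rfl, Nat.ModEq.mul_left_cancel' hc h⟩

lemma tendsto_card_filter_modEq_div {M : ℕ} (hM : 0 < M) (v : ℕ) :
    Tendsto (fun L : ℕ => (#{n ∈ range L | n ≡ v [MOD M]} : ℝ) / L) atTop (𝓝 (1 / M)) := by
  rw [tendsto_iff_norm_sub_tendsto_zero]
  refine squeeze_zero' (.of_forall fun _ => norm_nonneg _) ?_ tendsto_one_div_atTop_nhds_zero_nat
  filter_upwards [eventually_gt_atTop 0] with L hL
  set c := #{n ∈ range L | n ≡ v [MOD M]}
  have hc : L / M ≤ c ∧ c ≤ L / M + 1 := by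
    have := Nat.count_modEq_card L hM v
    rw [Nat.count_eq_card_filter_range] at this
    split_ifs at this <;> omega
  have hdiv : M * (L / M) ≤ L ∧ L < M * (L / M) + M :=
    ⟨Nat.mul_div_le L M, by have := Nat.div_add_mod L M; have := Nat.mod_lt L hM; omega⟩
  have hle : (M : ℝ) * c ≤ L + M := by exact_mod_cast (by nlinarith : M * c ≤ L + M)
  have hge : (L : ℝ) ≤ M * c + M := by exact_mod_cast (by nlinarith : L ≤ M * c + M)
  have hL' : (0 : ℝ) < L := by exact_mod_cast hL
  have hM' : (0 : ℝ) < M := by exact_mod_cast hM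
  calc ‖(c : ℝ) / L - 1 / M‖ = |(M : ℝ) * c - L| / (M * L) := by
        rw [Real.norm_eq_abs, div_sub_div _ _ hL'.ne' hM'.ne', abs_div,
          abs_of_pos (by positivity : (0 : ℝ) < L * M)]
        ring_nf
    _ ≤ M / (M * L) := by gcongr; rw [abs_sub_le_iff]; constructor <;> linarith
    _ = 1 / L := by field_simp

lemma tendsto_density_of_iff_add_one_modEq {P : ℕ → Prop} [DecidablePred P] {c e : ℕ}
    (hP : ∀ n, P n ↔ n + 1 ≡ c [MOD 2 ^ (e + 1)]) :
    Tendsto (fun N : ℕ => (#{n ∈ range (2 * N) | P n} : ℝ) / N) atTop (𝓝 ((1 / 2) ^ e)) := by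
  set M := 2 ^ (e + 1)
  have hM : 0 < M := by positivity
  have hP' : ∀ n, P n ↔ n ≡ c + M - 1 [MOD M] := fun n => by
    rw [hP, ← (Nat.ModEq.refl 1).add_iff_right (a := n),
      Nat.sub_add_cancel (by omega), Nat.modEq_add_modulus_iff]
  have h := ((tendsto_card_filter_modEq_div hM (c + M - 1)).comp
    (tendsto_id.const_mul_atTop' two_pos)).const_mul 2
  convert h using 2 with N
  · simp only [hP', Function.comp_apply, id]
    push_cast
    ring
  · simp [M, pow_succ]

lemma collatzK_eq_iff {n a : ℕ} :
    collatzK n = a ↔ ∃ m, n + 1 = 2 ^ a * m ∧ m ≡ 1 [MOD 2] := by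
  rw [collatzK, padicValNat_two_eq_iff_modEq n.succ_ne_zero,
    exists_eq_mul_modEq_iff (by positivity), mul_one, pow_succ]

lemma odd_of_collatzK_eq {n a : ℕ} (ha : 1 ≤ a) (hk : collatzK n = a) : Odd n := by
  have : 2 ^ 1 ∣ n + 1 := (pow_dvd_pow 2 ha).trans (hk ▸ pow_padicValNat_dvd)
  exact Nat.odd_iff.mpr (by omega)

lemma odd_and_collatzK_eq_iff {n a : ℕ} (ha : 1 ≤ a) :
    Odd n ∧ collatzK n = a ↔ n + 1 ≡ 2 ^ a [MOD 2 ^ (a + 1)] := by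
  rw [and_iff_right_of_imp (odd_of_collatzK_eq ha), collatzK,
    padicValNat_two_eq_iff_modEq n.succ_ne_zero]

lemma collatzApex_eq {n a m : ℕ} (hk : collatzK n = a) (hn : n + 1 = 2 ^ a * m) :
    collatzApex n = 3 ^ a * m - 1 := by
  rw [collatzApex, hk, hn, Nat.mul_div_cancel_left _ (by positivity)]

lemma collatzKp_eq_iff {n a m b : ℕ} (ha : 1 ≤ a) (hm : m ≡ 1 [MOD 2])
    (hk : collatzK n = a) (hn : n + 1 = 2 ^ a * m) :
    collatzKp n = b ↔ 3 ^ a * m ≡ 2 ^ b + 1 [MOD 2 ^ (b + 1)] := by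
  have hm_pos : 1 ≤ m := by
    by_contra! h
    simp [Nat.lt_one_iff.mp h, Nat.ModEq] at hm
  have h3 : 3 ≤ 3 ^ a * m := le_mul_of_le_of_one_le (Nat.le_self_pow (by omega) 3) hm_pos
  rw [collatzKp, collatzApex_eq hk hn, padicValNat_two_eq_iff_modEq (by omega)]
  constructor
  · intro h
    simpa [Nat.sub_add_cancel (by omega : 1 ≤ 3 ^ a * m)] using h.add_right 1
  · intro h
    refine Nat.ModEq.add_right_cancel' 1 ?_
    rwa [Nat.sub_add_cancel (by omega)]

theorem odd_and_collatzK_and_collatzKp_iff {n a b s : ℕ} (ha : 1 ≤ a) (hb : 1 ≤ b)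
    (hs : 3 ^ a * s ≡ 2 ^ b + 1 [MOD 2 ^ (b + 1)]) :
    Odd n ∧ collatzK n = a ∧ collatzKp n = b ↔ n + 1 ≡ 2 ^ a * s [MOD 2 ^ (a + b + 1)] := by
  have hs_odd : s ≡ 1 [MOD 2] := by
    obtain ⟨b, rfl⟩ : ∃ b', b = b' + 1 := ⟨b - 1, by omega⟩
    have h2 := hs.of_dvd (dvd_pow_self 2 (by omega))
    simpa [Nat.ModEq, Nat.mul_mod, Nat.pow_mod, Nat.add_mod, pow_succ] using h2
  have hcop : Nat.gcd (2 ^ (b + 1)) (3 ^ a) = 1 := Nat.Coprime.pow _ _ (by norm_num)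
  calc Odd n ∧ collatzK n = a ∧ collatzKp n = b
      ↔ ∃ m, n + 1 = 2 ^ a * m ∧ m ≡ s [MOD 2 ^ (b + 1)] := by
        constructor
        · rintro ⟨-, hk, hkp⟩
          obtain ⟨m, hn, hm⟩ := collatzK_eq_iff.mp hk
          have h3m := (collatzKp_eq_iff ha hm hk hn).mp hkp
          exact ⟨m, hn, Nat.ModEq.cancel_left_of_coprime hcop (h3m.trans hs.symm)⟩
        · rintro ⟨m, hn, hms⟩
          have hm : m ≡ 1 [MOD 2] := (hms.of_dvd (dvd_pow_self 2 (by omega))).trans hs_odd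
          have hk : collatzK n = a := collatzK_eq_iff.mpr ⟨m, hn, hm⟩
          exact ⟨odd_of_collatzK_eq ha hk, hk,
            (collatzKp_eq_iff ha hm hk hn).mpr ((hms.mul_left _).trans hs)⟩
    _ ↔ n + 1 ≡ 2 ^ a * s [MOD 2 ^ (a + b + 1)] := by
        rw [exists_eq_mul_modEq_iff (by positivity), ← pow_add, add_assoc]

open scoped Classical in
/-- Corollary 1: Among odd integers (uniform in {1,3,...,2N-1}, N → ∞),
the density of {k = a} is 2^{-a}, the density of {k' = b} conditional on {k = a} is
2^{-b}, and the joint density of {k = a, k' = b} is 2^{-(a+b)}: k and k' are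
asymptotically independent. -/
theorem density_k_kprime (a b : ℕ) (ha : 1 ≤ a) (hb : 1 ≤ b) :
    Tendsto (fun N : ℕ =>
      (((Finset.range (2 * N)).filter fun n => Odd n ∧ collatzK n = a).card : ℝ) / N)
      atTop (nhds ((1 / 2 : ℝ) ^ a)) ∧
    Tendsto (fun N : ℕ =>
      (((Finset.range (2 * N)).filter fun n =>
          Odd n ∧ collatzK n = a ∧ collatzKp n = b).card : ℝ) /
        (((Finset.range (2 * N)).filter fun n => Odd n ∧ collatzK n = a).card : ℝ))
      atTop (nhds ((1 / 2 : ℝ) ^ b)) ∧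
    Tendsto (fun N : ℕ =>
      (((Finset.range (2 * N)).filter fun n =>
          Odd n ∧ collatzK n = a ∧ collatzKp n = b).card : ℝ) / N)
      atTop (nhds ((1 / 2 : ℝ) ^ (a + b))) := by
  obtain ⟨s, -, hs⟩ := Nat.exists_mul_mod_eq_of_coprime (2 ^ b + 1)
    (Nat.Coprime.pow a (b + 1) (by norm_num : Nat.Coprime 3 2)) (by positivity)
  have hk := tendsto_density_of_iff_add_one_modEq fun n => odd_and_collatzK_eq_iff (n := n) ha
  have hkk' := tendsto_density_of_iff_add_one_modEq fun n =>
    odd_and_collatzK_and_collatzKp_iff (n := n) ha hb hs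
  refine ⟨hk, ?_, hkk'⟩
  have hcond := hkk'.div hk (by positivity)
  rw [pow_add, mul_div_cancel_left₀ _ (by positivity)] at hcond
  refine hcond.congr' ?_
  filter_upwards [eventually_ne_atTop 0] with N hN
  exact div_div_div_cancel_right₀ (by exact_mod_cast hN) _ _
end
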